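/- arXiv:1903.10785 — 2 statements merged into one kernel-verified Lean document; each statement's English description precedes it below -/
import Mathlib

section
/- Let Γ = {(a,b) ∈ ℝ² : 0 < a−b ≤ 1, −1 ≤ a ≤ 2, −2 ≤ b ≤ 1} ∪ (([0,1]×[−1,0]) \ {(0,0)}) ∪ {(a,a) : a ≠ 0}, and for (a,b) ∈ Γ define u_{a,b} : (0,∞) → (0,∞) by u_{a,b}(t) = g_a(t)/g_b(t) for t ≠ 1 and u_{a,b}(1) = 1, where g_c(t) = (t^c − 1)/c for c ≠ 0 and g_0(t) = log t. Then u_{a,b} is geometrically concave if and only if |a| ≤ |b|. -/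
/-- The parameter region `Γ`. -/
def GammaRegion : Set (ℝ × ℝ) :=
  {p | (0 < p.1 - p.2 ∧ p.1 - p.2 ≤ 1 ∧ -1 ≤ p.1 ∧ p.1 ≤ 2 ∧ -2 ≤ p.2 ∧ p.2 ≤ 1)} ∪
  ((Set.Icc (0 : ℝ) 1 ×ˢ Set.Icc (-1 : ℝ) 0) \ {(0, 0)}) ∪
  {p | p.1 = p.2 ∧ p.1 ≠ 0}

/-- `g_c(t) = (t^c - 1)/c` for `c ≠ 0`, and `g_0(t) = log t`. -/
noncomputable def gAux (c t : ℝ) : ℝ :=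
  if c = 0 then Real.log t else (t ^ c - 1) / c

/-- The function `u_{a,b}(t) = g_a(t)/g_b(t)`, extended by `u_{a,b}(1) = 1`. -/
noncomputable def uab (a b t : ℝ) : ℝ :=
  if t = 1 then 1 else gAux a t / gAux b t

/-!
Put `t = exp s`. Then `g_c (exp s) = exp (c s / 2) * Q_c s` with `Q_c s = 2 sinh (c s / 2) / c`
(and `Q_0 s = s`), so `log u_{a,b} (exp s) = (a - b) s / 2 + W s` with `W = log (Q_a / Q_b)`, and
geometric concavity of `u_{a,b}` is midpoint concavity of `W`. Since `Q_c' = cosh (c s / 2)` and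
`Q_c'' = (c / 2)² Q_c`, we get `(log Q_c)'' = -1 / Q_c²`; and `Q_c s` increases with `|c|` for
`s > 0`. Hence for `|a| ≤ |b|` the even function `W` is concave on `[0, ∞)` with maximum `W 0 = 0`,
so it is concave on all of `ℝ`. If `|b| < |a|`, then `W (±2) > 0 = W 0`.
-/

open Real Set Filter Topology

lemma ConcaveOn.add_le_two_mul_map_add_div_two {s : Set ℝ} {f : ℝ → ℝ} (hf : ConcaveOn ℝ s f)
    {x y : ℝ} (hx : x ∈ s) (hy : y ∈ s) : f x + f y ≤ 2 * f ((x + y) / 2) := by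
  have := hf.2 hx hy (by norm_num : (0 : ℝ) ≤ 1 / 2) (by norm_num : (0 : ℝ) ≤ 1 / 2) (by norm_num)
  simp only [smul_eq_mul] at this
  rw [show 1 / 2 * x + 1 / 2 * y = (x + y) / 2 by ring] at this
  linarith

lemma ConcaveOn.antitoneOn_Ici_of_le_map_zero {f : ℝ → ℝ} (hf : ConcaveOn ℝ (Ici 0) f)
    (hmax : ∀ x, 0 ≤ x → f x ≤ f 0) : AntitoneOn f (Ici 0) := by
  intro x hx y hy hxy
  rcases (mem_Ici.1 hx).eq_or_lt with rfl | hx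
  · exact hmax y hy
  rcases hxy.eq_or_lt with rfl | hxy
  · rfl
  have hx_mem : x ∈ openSegment ℝ 0 y := by
    rw [openSegment_eq_Ioo (hx.trans hxy)]
    exact ⟨hx, hxy⟩
  exact hf.right_le_of_le_left self_mem_Ici hy hx_mem (hmax x hx.le)

lemma concaveOn_univ_of_even {f : ℝ → ℝ} (hf : ConcaveOn ℝ (Ici 0) f)
    (hmax : ∀ x, 0 ≤ x → f x ≤ f 0) (heven : ∀ x, f (-x) = f x) : ConcaveOn ℝ univ f := by
  have hf_abs : f = f ∘ (fun x => |x|) := by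
    funext x
    rcases abs_choice x with h | h <;> simp [h, heven]
  have himage : (fun x : ℝ => |x|) '' univ = Ici 0 := by
    ext y
    refine ⟨?_, fun hy => ⟨y, mem_univ y, abs_of_nonneg hy⟩⟩
    rintro ⟨x, -, rfl⟩
    exact abs_nonneg x
  rw [hf_abs]
  refine ConcaveOn.comp_convexOn ?_ (convexOn_univ_norm (E := ℝ)) ?_ <;> rw [himage]
  · exact hf
  · exact hf.antitoneOn_Ici_of_le_map_zero hmax

lemma sqrt_exp_mul_exp (x y : ℝ) : √(exp x * exp y) = exp ((x + y) / 2) := by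
  rw [← exp_add, ← exp_half]

lemma geomConcave_iff_of_exp {f F : ℝ → ℝ} (hf : ∀ s, f (exp s) = exp (F s)) :
    (∀ x y : ℝ, 0 < x → 0 < y → √(f x * f y) ≤ f √(x * y)) ↔
      ∀ p q, F p + F q ≤ 2 * F ((p + q) / 2) := by
  have key : ∀ p q, √(f (exp p) * f (exp q)) ≤ f √(exp p * exp q) ↔
      F p + F q ≤ 2 * F ((p + q) / 2) := by
    intro p q
    rw [hf, hf, sqrt_exp_mul_exp, sqrt_exp_mul_exp, hf, exp_le_exp]
    constructor <;> intro h <;> linarith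
  constructor
  · exact fun h p q => (key p q).1 (h _ _ (exp_pos p) (exp_pos q))
  · intro h x y hx hy
    rw [← exp_log hx, ← exp_log hy]
    exact (key _ _).2 (h _ _)

noncomputable def gSym (c s : ℝ) : ℝ := if c = 0 then s else 2 * sinh (c * s / 2) / c

@[simp] lemma gSym_zero_left (s : ℝ) : gSym 0 s = s := if_pos rfl

@[simp] lemma gSym_zero_right (c : ℝ) : gSym c 0 = 0 := by simp [gSym]

lemma gAux_exp (c s : ℝ) : gAux c (exp s) = exp (c * s / 2) * gSym c s := by
  rcases eq_or_ne c 0 with rfl | hc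
  · simp [gAux]
  have hsq : exp (c * s) = exp (c * s / 2) ^ 2 := by rw [← exp_nat_mul]; ring_nf
  simp only [gAux, gSym, if_neg hc, ← exp_mul, sinh_eq, exp_neg, mul_comm s c]
  field_simp
  rw [hsq]

lemma gSym_neg_left (c s : ℝ) : gSym (-c) s = gSym c s := by
  rcases eq_or_ne c 0 with rfl | hc
  · simp
  simp only [gSym, if_neg hc, neg_ne_zero.2 hc, if_false, neg_mul, neg_div, sinh_neg, mul_neg]
  field_simp

lemma gSym_abs_left (c s : ℝ) : gSym |c| s = gSym c s := by
  rcases abs_choice c with h | h <;> rw [h]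
  exact gSym_neg_left c s

lemma gSym_neg_right (c s : ℝ) : gSym c (-s) = -gSym c s := by
  rcases eq_or_ne c 0 with rfl | hc
  · simp
  simp only [gSym, if_neg hc, mul_neg, neg_div, sinh_neg]

lemma hasDerivAt_gSym (c s : ℝ) : HasDerivAt (gSym c) (cosh (c * s / 2)) s := by
  rcases eq_or_ne c 0 with rfl | hc
  · rw [show gSym 0 = fun t => t from funext gSym_zero_left]
    simpa using hasDerivAt_id' s
  rw [show gSym c = fun t => 2 * sinh (c * t / 2) / c from funext fun t => if_neg hc]
  have h := ((((hasDerivAt_id' s).const_mul c).div_const 2).sinh.const_mul 2).div_const c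
  refine h.congr_deriv ?_
  field_simp

lemma gSym_lt_gSym {a b s : ℝ} (h : |a| < |b|) (hs : 0 < s) : gSym a s < gSym b s := by
  have hd (t : ℝ) : HasDerivAt (fun t => gSym b t - gSym a t)
      (cosh (b * t / 2) - cosh (a * t / 2)) t :=
    (hasDerivAt_gSym b t).sub (hasDerivAt_gSym a t)
  have hmono : StrictMonoOn (fun t => gSym b t - gSym a t) (Ici 0) := by
    refine strictMonoOn_of_deriv_pos (convex_Ici 0)
      (fun t _ => (hd t).continuousAt.continuousWithinAt) fun t ht => ?_
    rw [interior_Ici] at ht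
    rw [(hd t).deriv, sub_pos, cosh_lt_cosh]
    simp only [abs_div, abs_mul, abs_of_pos (mem_Ioi.1 ht)]
    gcongr
  simpa using hmono self_mem_Ici hs.le hs

lemma gSym_le_gSym {a b s : ℝ} (h : |a| ≤ |b|) (hs : 0 < s) : gSym a s ≤ gSym b s := by
  rcases h.lt_or_eq with h | h
  · exact (gSym_lt_gSym h hs).le
  · rw [← gSym_abs_left a, h, gSym_abs_left]

lemma gSym_pos (c : ℝ) {s : ℝ} (hs : 0 < s) : 0 < gSym c s :=
  hs.trans_le (by simpa using gSym_le_gSym (by simp : |(0 : ℝ)| ≤ |c|) hs)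

lemma gSym_div_gSym_pos (a b : ℝ) {s : ℝ} (hs : s ≠ 0) : 0 < gSym a s / gSym b s := by
  rcases hs.lt_or_gt with hs | hs
  · rw [← neg_div_neg_eq, ← gSym_neg_right, ← gSym_neg_right]
    exact div_pos (gSym_pos a (neg_pos.2 hs)) (gSym_pos b (neg_pos.2 hs))
  · exact div_pos (gSym_pos a hs) (gSym_pos b hs)

lemma tendsto_gSym_div_self (c : ℝ) : Tendsto (fun s => gSym c s / s) (𝓝[≠] 0) (𝓝 1) := by
  simpa [div_eq_inv_mul] using (hasDerivAt_gSym c 0).tendsto_slope_zero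

lemma hasDerivAt_log_gSym (c : ℝ) {s : ℝ} (hs : 0 < s) :
    HasDerivAt (fun t => log (gSym c t)) (cosh (c * s / 2) / gSym c s) s :=
  (hasDerivAt_gSym c s).log (gSym_pos c hs).ne'

lemma hasDerivAt_cosh_div_gSym (c : ℝ) {s : ℝ} (hs : 0 < s) :
    HasDerivAt (fun t => cosh (c * t / 2) / gSym c t) (-(gSym c s ^ 2)⁻¹) s := by
  have hQ := (gSym_pos c hs).ne'
  have hsinh : c / 2 * sinh (c * s / 2) * gSym c s = sinh (c * s / 2) ^ 2 := by
    rcases eq_or_ne c 0 with rfl | hc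
    · simp
    · simp only [gSym, if_neg hc]
      field_simp
  refine ((((hasDerivAt_id' s).const_mul c).div_const 2).cosh.div (hasDerivAt_gSym c s)
    hQ).congr_deriv ?_
  field_simp
  linear_combination 2 * hsinh - 2 * cosh_sq (c * s / 2)

-- At `s = 0` the junk values `0 / 0 = 0` and `log 0 = 0` give the correct value `wab a b 0 = 0`.
noncomputable def wab (a b s : ℝ) : ℝ := log (gSym a s / gSym b s)

@[simp] lemma wab_zero (a b : ℝ) : wab a b 0 = 0 := by simp [wab]

lemma wab_neg (a b s : ℝ) : wab a b (-s) = wab a b s := by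
  rw [wab, gSym_neg_right, gSym_neg_right, neg_div_neg_eq, wab]

lemma uab_exp (a b s : ℝ) : uab a b (exp s) = exp ((a - b) * s / 2 + wab a b s) := by
  rcases eq_or_ne s 0 with rfl | hs
  · simp [uab]
  rw [uab, if_neg (exp_eq_one_iff s |>.not.2 hs), gAux_exp, gAux_exp, exp_add, wab,
    exp_log (gSym_div_gSym_pos a b hs), mul_div_mul_comm, ← exp_sub]
  ring_nf

lemma wab_nonpos {a b : ℝ} (h : |a| ≤ |b|) {s : ℝ} (hs : 0 ≤ s) : wab a b s ≤ 0 := by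
  rcases hs.eq_or_lt with rfl | hs
  · simp
  exact log_nonpos (gSym_div_gSym_pos a b hs.ne').le
    ((div_le_one (gSym_pos b hs)).2 (gSym_le_gSym h hs))

lemma wab_pos {a b : ℝ} (h : |b| < |a|) {s : ℝ} (hs : 0 < s) : 0 < wab a b s :=
  log_pos ((one_lt_div (gSym_pos b hs)).2 (gSym_lt_gSym h hs))

lemma continuousAt_wab_zero (a b : ℝ) : ContinuousAt (wab a b) 0 := by
  rw [← continuousWithinAt_compl_self, ContinuousWithinAt, wab_zero]
  have hratio : Tendsto (fun s => gSym a s / gSym b s) (𝓝[≠] 0) (𝓝 1) := by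
    have h := (tendsto_gSym_div_self a).div (tendsto_gSym_div_self b) one_ne_zero
    rw [div_one] at h
    refine h.congr' ?_
    filter_upwards [self_mem_nhdsWithin] with s hs
    exact div_div_div_cancel_right₀ hs _ _
  have h := (continuousAt_log one_ne_zero).tendsto.comp hratio
  rwa [log_one] at h

lemma hasDerivAt_wab (a b : ℝ) {s : ℝ} (hs : 0 < s) :
    HasDerivAt (wab a b) (cosh (a * s / 2) / gSym a s - cosh (b * s / 2) / gSym b s) s := by
  refine ((hasDerivAt_log_gSym a hs).sub (hasDerivAt_log_gSym b hs)).congr_of_eventuallyEq ?_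
  filter_upwards [Ioi_mem_nhds hs] with t ht
  exact log_div (gSym_pos a ht).ne' (gSym_pos b ht).ne'

lemma concaveOn_wab_Ici {a b : ℝ} (h : |a| ≤ |b|) : ConcaveOn ℝ (Ici 0) (wab a b) := by
  refine concaveOn_of_hasDerivWithinAt2_nonpos (convex_Ici 0)
    (f' := fun s => cosh (a * s / 2) / gSym a s - cosh (b * s / 2) / gSym b s)
    (f'' := fun s => -(gSym a s ^ 2)⁻¹ - -(gSym b s ^ 2)⁻¹) ?_ ?_ ?_ ?_
  · intro s hs
    rcases (mem_Ici.1 hs).eq_or_lt with rfl | hs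
    · exact (continuousAt_wab_zero a b).continuousWithinAt
    · exact (hasDerivAt_wab a b hs).continuousAt.continuousWithinAt
  all_goals
    intro s hs
    rw [interior_Ici] at hs
  · exact (hasDerivAt_wab a b hs).hasDerivWithinAt
  · exact ((hasDerivAt_cosh_div_gSym a hs).sub (hasDerivAt_cosh_div_gSym b hs)).hasDerivWithinAt
  · have hsq : gSym a s ^ 2 ≤ gSym b s ^ 2 :=
      pow_le_pow_left₀ (gSym_pos a hs).le (gSym_le_gSym h hs) 2
    linarith [inv_anti₀ (pow_pos (gSym_pos a hs) 2) hsq]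

lemma concaveOn_wab {a b : ℝ} (h : |a| ≤ |b|) : ConcaveOn ℝ univ (wab a b) :=
  concaveOn_univ_of_even (concaveOn_wab_Ici h)
    (fun _ hs => (wab_zero a b).symm ▸ wab_nonpos h hs) (wab_neg a b)

theorem uab_geomConcave_iff_general (a b : ℝ) :
    (∀ x y : ℝ, 0 < x → 0 < y →
      Real.sqrt (uab a b x * uab a b y) ≤ uab a b (Real.sqrt (x * y))) ↔
    |a| ≤ |b| := by
  rw [geomConcave_iff_of_exp (uab_exp a b)]
  constructor
  · intro h
    by_contra! hba
    have h2 := h 2 (-2)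
    norm_num [wab_neg] at h2
    linarith [wab_pos hba two_pos]
  · intro h p q
    have := (concaveOn_wab h).add_le_two_mul_map_add_div_two (mem_univ p) (mem_univ q)
    linarith

/-- For `(a,b) ∈ Γ`, the function `u_{a,b}` is geometrically concave iff `|a| ≤ |b|`. -/
theorem uab_geomConcave_iff (a b : ℝ) (hΓ : (a, b) ∈ GammaRegion) :
    (∀ x y : ℝ, 0 < x → 0 < y →
      Real.sqrt (uab a b x * uab a b y) ≤ uab a b (Real.sqrt (x * y))) ↔
    |a| ≤ |b| :=
  uab_geomConcave_iff_general a b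
end

section
/- Let n ≥ 1, let 0 = a₁ < a₂ < ⋯ < a_n, let γ₁ ≥ 1, γ_i > 0 for all i, and β > 0, and define u : (0,∞) → (0,∞) by u(t) = β·∏_{i=1}^n (t + a_i)^{γ_i}, assuming u(1) = 1. Let f : (0,∞) → (0,∞) be continuous, monotone increasing, geometrically convex and satisfy f(1) = 1. Then the function t ↦ u(t)·f(t) is a strictly increasing continuous bijection of (0,∞) onto (0,∞) and its inverse function is geometrically concave. -/
open Set

/-!
Both factors of `g(t) = u(t)·f(t)` are geometrically convex: for `a ≥ 0` the AM–GM inequality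
gives `√(xy) + a ≤ √((x+a)(y+a))`, and geometric convexity survives positive powers and products
of nonnegative functions. Since `a₀ = 0` and `γ₀ ≥ 1`, `g(t) = t·k(t)` with `k = (u/t)·f` monotone
and `k(1) = 1`; so `g` is strictly increasing, `g ≤ id` on `(0,1]` and `g ≥ id` on `[1,∞)`, and the
intermediate value theorem makes `g` onto. Applying the monotone inverse to
`g(√(v x · v y)) ≤ √(xy) = g(v(√(xy)))` gives the geometric concavity of the inverse `v`.
-/

def GeomConvex (f : ℝ → ℝ) : Prop :=
  ∀ x y : ℝ, 0 < x → 0 < y → f (Real.sqrt (x * y)) ≤ Real.sqrt (f x * f y)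

def GeomConcave (f : ℝ → ℝ) : Prop :=
  ∀ x y : ℝ, 0 < x → 0 < y → Real.sqrt (f x * f y) ≤ f (Real.sqrt (x * y))

namespace GeomConvex

variable {f g : ℝ → ℝ}

theorem const (c : ℝ) : GeomConvex fun _ => c := fun _ _ _ _ => by
  rw [Real.sqrt_mul_self_eq_abs]
  exact le_abs_self c

theorem add_const {a : ℝ} (ha : 0 ≤ a) : GeomConvex fun t => t + a := by
  intro x y hx hy
  have hamgm : 2 * Real.sqrt (x * y) ≤ x + y := by
    rw [Real.sqrt_mul hx.le]
    nlinarith [sq_nonneg (Real.sqrt x - Real.sqrt y), Real.sq_sqrt hx.le, Real.sq_sqrt hy.le]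
  rw [Real.le_sqrt (by positivity) (by positivity)]
  nlinarith [Real.sq_sqrt (mul_pos hx hy).le]

theorem mul (hf : GeomConvex f) (hg : GeomConvex g) (hf₀ : ∀ t, 0 < t → 0 ≤ f t)
    (hg₀ : ∀ t, 0 < t → 0 ≤ g t) : GeomConvex fun t => f t * g t := by
  intro x y hx hy
  have hxy : 0 < Real.sqrt (x * y) := Real.sqrt_pos.mpr (mul_pos hx hy)
  calc f (Real.sqrt (x * y)) * g (Real.sqrt (x * y))
      ≤ Real.sqrt (f x * f y) * Real.sqrt (g x * g y) :=
        mul_le_mul (hf x y hx hy) (hg x y hx hy) (hg₀ _ hxy) (Real.sqrt_nonneg _)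
    _ = Real.sqrt (f x * g x * (f y * g y)) := by
        rw [← Real.sqrt_mul (mul_nonneg (hf₀ x hx) (hf₀ y hy))]
        ring_nf

theorem rpow (hf : GeomConvex f) (hf₀ : ∀ t, 0 < t → 0 ≤ f t) {γ : ℝ} (hγ : 0 ≤ γ) :
    GeomConvex fun t => f t ^ γ := by
  intro x y hx hy
  have hfxy := mul_nonneg (hf₀ x hx) (hf₀ y hy)
  calc f (Real.sqrt (x * y)) ^ γ ≤ Real.sqrt (f x * f y) ^ γ :=
        Real.rpow_le_rpow (hf₀ _ (Real.sqrt_pos.mpr (mul_pos hx hy))) (hf x y hx hy) hγ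
    _ = Real.sqrt (f x ^ γ * f y ^ γ) := by
        rw [Real.sqrt_eq_rpow, Real.sqrt_eq_rpow, ← Real.rpow_mul hfxy, mul_comm (1 / 2 : ℝ),
          Real.rpow_mul hfxy, Real.mul_rpow (hf₀ x hx) (hf₀ y hy)]

theorem prod {ι : Type*} (s : Finset ι) {f : ι → ℝ → ℝ} (hf : ∀ i ∈ s, GeomConvex (f i))
    (hf₀ : ∀ i ∈ s, ∀ t, 0 < t → 0 ≤ f i t) : GeomConvex fun t => ∏ i ∈ s, f i t := by
  rw [← Finset.prod_fn]
  refine (Finset.prod_induction f (fun h => GeomConvex h ∧ ∀ t, 0 < t → 0 ≤ h t)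
    (fun h₁ h₂ h₁' h₂' => ⟨h₁'.1.mul h₂'.1 h₁'.2 h₂'.2, fun t ht => ?_⟩)
    ⟨const 1, fun _ _ => zero_le_one⟩ fun i hi => ⟨hf i hi, hf₀ i hi⟩).1
  exact mul_nonneg (h₁'.2 t ht) (h₂'.2 t ht)

theorem geomConcave_of_rightInvOn (hf : GeomConvex f) (hmono : StrictMonoOn f (Ioi 0))
    {v : ℝ → ℝ} (hv : ∀ s, 0 < s → 0 < v s) (hfv : ∀ s, 0 < s → f (v s) = s) :
    GeomConcave v := by
  intro x y hx hy
  have hxy : 0 < Real.sqrt (x * y) := Real.sqrt_pos.mpr (mul_pos hx hy)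
  have hvxy : 0 < Real.sqrt (v x * v y) := Real.sqrt_pos.mpr (mul_pos (hv x hx) (hv y hy))
  refine (hmono.le_iff_le hvxy (hv _ hxy)).mp ?_
  calc f (Real.sqrt (v x * v y)) ≤ Real.sqrt (f (v x) * f (v y)) := hf _ _ (hv x hx) (hv y hy)
    _ = f (v (Real.sqrt (x * y))) := by rw [hfv x hx, hfv y hy, hfv _ hxy]

end GeomConvex

section MulSelf

variable {g k : ℝ → ℝ} (hgk : EqOn g (fun t => t * k t) (Ioi 0)) (hk : MonotoneOn k (Ioi 0))
include hgk hk

theorem strictMonoOn_of_eqOn_mul_self (hk₀ : ∀ t, 0 < t → 0 < k t) : StrictMonoOn g (Ioi 0) := by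
  refine StrictMonoOn.congr (fun s hs t ht hst => ?_) hgk.symm
  exact mul_lt_mul hst (hk hs ht hst.le) (hk₀ s hs) (le_of_lt ht)

theorem surjOn_Ioi_of_eqOn_mul_self (hg : ContinuousOn g (Ioi 0)) (hk1 : k 1 = 1) :
    SurjOn g (Ioi 0) (Ioi 0) := by
  intro s (hs : 0 < s)
  have hlo : 0 < min s 1 := lt_min hs one_pos
  have hhi : 1 ≤ max s 1 := le_max_right s 1
  have hsub : Icc (min s 1) (max s 1) ⊆ Ioi 0 := fun t ht => hlo.trans_le ht.1
  have hglo : g (min s 1) ≤ s := by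
    have hk_le : k (min s 1) ≤ 1 := (hk hlo (mem_Ioi.mpr one_pos) (min_le_right s 1)).trans_eq hk1
    rw [hgk hlo]
    nlinarith [min_le_left s 1]
  have hghi : s ≤ g (max s 1) := by
    have hk_ge : 1 ≤ k (max s 1) :=
      hk1.symm.trans_le (hk (mem_Ioi.mpr one_pos) (one_pos.trans_le hhi) hhi)
    rw [hgk (one_pos.trans_le hhi)]
    nlinarith [le_max_left s 1]
  obtain ⟨t, ht, hts⟩ := intermediate_value_Icc min_le_max (hg.mono hsub) ⟨hglo, hghi⟩
  exact ⟨t, hsub ht, hts⟩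

end MulSelf

theorem monotoneOn_prod_add_rpow {ι : Type*} (s : Finset ι) {a γ : ι → ℝ} (ha : ∀ i, 0 ≤ a i)
    (hγ : ∀ i, 0 ≤ γ i) :
    MonotoneOn (fun t => ∏ i ∈ s, (t + a i) ^ γ i) (Ioi 0) := fun x (hx : 0 < x) y _ hxy =>
  Finset.prod_le_prod (fun i _ => Real.rpow_nonneg (by linarith [ha i]) _)
    fun i _ => Real.rpow_le_rpow (by linarith [ha i]) (by linarith) (hγ i)

noncomputable def polyProd {ι : Type*} [Fintype ι] (β : ℝ) (a γ : ι → ℝ) (t : ℝ) : ℝ :=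
  β * ∏ i, (t + a i) ^ γ i

section PolyProd

variable {ι : Type*} [Fintype ι] {β : ℝ} {a γ : ι → ℝ}

theorem polyProd_pos (hβ : 0 < β) (ha : ∀ i, 0 ≤ a i) {t : ℝ} (ht : 0 < t) :
    0 < polyProd β a γ t :=
  mul_pos hβ (Finset.prod_pos fun i _ => Real.rpow_pos_of_pos (by linarith [ha i]) _)

theorem continuous_polyProd (hγ : ∀ i, 0 ≤ γ i) : Continuous (polyProd β a γ) :=
  continuous_const.mul <| continuous_finsetProd _ fun i _ =>
    (continuous_id.add continuous_const).rpow_const fun _ => Or.inr (hγ i)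

theorem geomConvex_polyProd (hβ : 0 ≤ β) (ha : ∀ i, 0 ≤ a i) (hγ : ∀ i, 0 ≤ γ i) :
    GeomConvex (polyProd β a γ) :=
  (GeomConvex.const β).mul
    (GeomConvex.prod _ (fun i _ => (GeomConvex.add_const (ha i)).rpow
      (fun t ht => by linarith [ha i]) (hγ i))
      fun i _ t ht => Real.rpow_nonneg (by linarith [ha i]) _)
    (fun _ _ => hβ) fun t ht =>
      Finset.prod_nonneg fun i _ => Real.rpow_nonneg (by linarith [ha i]) _

end PolyProd

theorem polyProd_div_self_eqOn {n : ℕ} {β : ℝ} {a γ : Fin (n + 1) → ℝ} (ha0 : a 0 = 0) :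
    EqOn (fun t => polyProd β a γ t / t)
      (fun t => β * t ^ (γ 0 - 1) * ∏ i : Fin n, (t + a i.succ) ^ γ i.succ) (Ioi 0) := by
  intro t (ht : 0 < t)
  simp only [polyProd, Fin.prod_univ_succ, ha0, add_zero, Real.rpow_sub_one ht.ne']
  ring

theorem monotoneOn_polyProd_div_self {n : ℕ} {β : ℝ} {a γ : Fin (n + 1) → ℝ} (hβ : 0 ≤ β)
    (ha0 : a 0 = 0) (ha : ∀ i, 0 ≤ a i) (hγ0 : 1 ≤ γ 0) (hγ : ∀ i, 0 ≤ γ i) :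
    MonotoneOn (fun t => polyProd β a γ t / t) (Ioi 0) := by
  refine MonotoneOn.congr ?_ (polyProd_div_self_eqOn ha0).symm
  refine (monotoneOn_const.mul ?_ (fun _ _ => hβ) ?_).mul
    (monotoneOn_prod_add_rpow (a := fun i : Fin n => a i.succ) (γ := fun i => γ i.succ) _
      (fun i => ha _) fun i => hγ _) ?_ ?_
  · exact (Real.monotoneOn_rpow_Ici_of_exponent_nonneg (by linarith)).mono Ioi_subset_Ici_self
  · exact fun t (ht : 0 < t) => Real.rpow_nonneg ht.le _
  · exact fun t (ht : 0 < t) => mul_nonneg hβ (Real.rpow_nonneg ht.le _)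
  · exact fun t (ht : 0 < t) => Finset.prod_nonneg fun i _ =>
      Real.rpow_nonneg (by linarith [ha i.succ]) _

/-- For `u(t) = β·∏ (t + aᵢ)^{γᵢ}` with `0 = a₀ < a₁ < ⋯ < aₙ`, `γ₀ ≥ 1`, `γᵢ > 0`,
`β > 0`, `u(1) = 1`, and `f` a positive continuous monotone increasing geometrically
convex function with `f(1) = 1`, the function `t ↦ u(t)·f(t)` is a strictly increasing
continuous bijection of `(0,∞)` onto itself whose inverse is geometrically concave. -/
theorem inverse_of_polyProd_mul_geomConvex (n : ℕ) (a γ : Fin (n + 1) → ℝ) (β : ℝ)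
    (ha0 : a 0 = 0) (hamono : StrictMono a)
    (hγ0 : 1 ≤ γ 0) (hγ : ∀ i, 0 < γ i) (hβ : 0 < β)
    (u : ℝ → ℝ) (hu : ∀ t : ℝ, u t = β * ∏ i, (t + a i) ^ γ i)
    (hu1 : u 1 = 1)
    (f : ℝ → ℝ)
    (hfpos : ∀ t : ℝ, 0 < t → 0 < f t)
    (hfcont : ContinuousOn f (Set.Ioi (0 : ℝ)))
    (hfmono : MonotoneOn f (Set.Ioi (0 : ℝ)))
    (hf1 : f 1 = 1)
    (hfgcv : ∀ x y : ℝ, 0 < x → 0 < y →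
      f (Real.sqrt (x * y)) ≤ Real.sqrt (f x * f y)) :
    StrictMonoOn (fun t : ℝ => u t * f t) (Set.Ioi (0 : ℝ)) ∧
    ContinuousOn (fun t : ℝ => u t * f t) (Set.Ioi (0 : ℝ)) ∧
    Set.BijOn (fun t : ℝ => u t * f t) (Set.Ioi (0 : ℝ)) (Set.Ioi (0 : ℝ)) ∧
    (∀ vinv : ℝ → ℝ,
      (∀ s : ℝ, 0 < s → 0 < vinv s) →
      (∀ t : ℝ, 0 < t → vinv (u t * f t) = t) →
      (∀ s : ℝ, 0 < s → u (vinv s) * f (vinv s) = s) →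
      (∀ x y : ℝ, 0 < x → 0 < y →
        Real.sqrt (vinv x * vinv y) ≤ vinv (Real.sqrt (x * y)))) := by
  have ha : ∀ i, 0 ≤ a i := fun i => ha0 ▸ hamono.monotone (Fin.zero_le i)
  obtain rfl : u = polyProd β a γ := funext hu
  have hγ' : ∀ i, 0 ≤ γ i := fun i => (hγ i).le
  have hupos : ∀ t, 0 < t → 0 < polyProd β a γ t := fun t => polyProd_pos hβ ha
  set k := fun t => polyProd β a γ t / t * f t
  have hgk : EqOn (fun t => polyProd β a γ t * f t) (fun t => t * k t) (Ioi 0) :=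
    fun t (ht : 0 < t) => by simp only [k]; field_simp
  have hk : MonotoneOn k (Ioi 0) :=
    (monotoneOn_polyProd_div_self hβ.le ha0 ha hγ0 hγ').mul hfmono
      (fun t (ht : 0 < t) => (div_pos (hupos t ht) ht).le) fun t ht => (hfpos t ht).le
  have hk₀ : ∀ t, 0 < t → 0 < k t := fun t ht => mul_pos (div_pos (hupos t ht) ht) (hfpos t ht)
  have hgcont : ContinuousOn (fun t => polyProd β a γ t * f t) (Ioi 0) :=
    (continuous_polyProd hγ').continuousOn.mul hfcont
  have hgmono := strictMonoOn_of_eqOn_mul_self hgk hk hk₀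
  have hgcv := (geomConvex_polyProd hβ.le ha hγ').mul hfgcv (fun t ht => (hupos t ht).le)
    fun t ht => (hfpos t ht).le
  refine ⟨hgmono, hgcont, ⟨fun t ht => mul_pos (hupos t ht) (hfpos t ht), hgmono.injOn,
    surjOn_Ioi_of_eqOn_mul_self hgk hk hgcont (by simp [k, hu1, hf1])⟩, ?_⟩
  exact fun v hv _ hgv => hgcv.geomConcave_of_rightInvOn hgmono hv hgv
end
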